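/- arXiv:2202.04009 — 3 statements merged into one kernel-verified Lean document; each statement's English description precedes it below -/
import Mathlib

section
/- Define F(R) = (3 - 2√(1-64R))/(32R) + (-1 + √(1-64R))/(1024R²) - 3/2 for 0 < R ≤ 1/64. Then F is monotone increasing on (0, 1/64] and F(1/64) = 1/2; in particular F(R) ≤ 1/2 for all R ∈ (0, 1/64]. -/
noncomputable def areaRatio (R : ℝ) : ℝ :=
  (3 - 2 * Real.sqrt (1 - 64 * R)) / (32 * R) +
  (-1 + Real.sqrt (1 - 64 * R)) / (1024 * R^2) - 3/2

lemma areaRatio_eq (R : ℝ) (hR0 : 0 < R) (hR1 : R ≤ 1/64) :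
    areaRatio R = 2 * (2 * Real.sqrt (1 - 64 * R) + 1) /
      (1 + Real.sqrt (1 - 64 * R))^2 - 3/2 := by
  set s := Real.sqrt (1 - 64 * R) with hs
  have h0 : (0:ℝ) ≤ 1 - 64 * R := by linarith
  have hsq : s ^ 2 = 1 - 64 * R := Real.sq_sqrt h0
  have hs0 : 0 ≤ s := Real.sqrt_nonneg _
  have hs1 : s < 1 := by nlinarith [hsq]
  have h1s : 1 - s ≠ 0 := by linarith
  have h1p : 1 + s ≠ 0 := by linarith
  unfold areaRatio
  rw [← hs, show R = (1 - s^2)/64 from by linarith]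
  have h1s2 : 1 - s^2 ≠ 0 := by nlinarith
  field_simp
  ring

lemma g_antitone {t s : ℝ} (ht0 : 0 ≤ t) (hts : t ≤ s) :
    2 * (2 * s + 1) / (1 + s)^2 ≤ 2 * (2 * t + 1) / (1 + t)^2 := by
  have hs0 : 0 ≤ s := le_trans ht0 hts
  have hDs : (0:ℝ) < (1 + s)^2 := by positivity
  have hDt : (0:ℝ) < (1 + t)^2 := by positivity
  rw [div_le_div_iff₀ hDs hDt]
  nlinarith [mul_nonneg (sub_nonneg.2 hts) (by nlinarith : (0:ℝ) ≤ 2*s*t + s + t)]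

theorem areaRatio_monotone :
    MonotoneOn areaRatio (Set.Ioc 0 (1/64)) ∧
    areaRatio (1/64) = 1/2 ∧
    ∀ R ∈ Set.Ioc (0:ℝ) (1/64), areaRatio R ≤ 1/2 := by
  have hmono : MonotoneOn areaRatio (Set.Ioc 0 (1/64)) := by
    intro R1 hR1 R2 hR2 hle
    obtain ⟨h10, h11⟩ := hR1
    obtain ⟨h20, h21⟩ := hR2
    rw [areaRatio_eq R1 h10 h11, areaRatio_eq R2 h20 h21]
    have hsub : Real.sqrt (1 - 64 * R2) ≤ Real.sqrt (1 - 64 * R1) :=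
      Real.sqrt_le_sqrt (by linarith)
    have ht0 : 0 ≤ Real.sqrt (1 - 64 * R2) := Real.sqrt_nonneg _
    linarith [g_antitone ht0 hsub]
  have hval : areaRatio (1/64) = 1/2 := by
    unfold areaRatio
    norm_num
  refine ⟨hmono, hval, fun R hR => ?_⟩
  have : areaRatio R ≤ areaRatio (1/64) :=
    hmono hR (by constructor <;> norm_num) hR.2
  linarith
end

section
/- For 0 < R < 1/64, the derivative of F(R) = (3 - 2√(1-64R))/(32R) + (-1 + √(1-64R))/(1024R²) - 3/2 equals (−1024R² − 48R√(1−64R) + 80R + √(1−64R) − 1)/(512R³√(1−64R)), and this derivative is nonnegative on (0, 1/64). -/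
open Real

theorem hasDerivAt_sqrt_one_sub_mul {c x : ℝ} (h : 1 - c * x ≠ 0) :
    HasDerivAt (fun y => √(1 - c * y)) (-c / (2 * √(1 - c * x))) x := by
  convert ((hasDerivAt_id' x).const_mul c).const_sub 1 |>.sqrt h using 1
  field_simp

theorem areaRatio_deriv_numerator_eq {R s : ℝ} (hs : s ^ 2 = 1 - 64 * R) :
    -1024 * R ^ 2 - 48 * R * s + 80 * R + s - 1 = s * (1 - s) ^ 3 / 4 := by
  obtain rfl : R = (1 - s ^ 2) / 64 := by linarith
  ring

theorem hasDerivAt_areaRatio {R : ℝ} (h0 : R ≠ 0) (h1 : R < 1 / 64) :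
    HasDerivAt areaRatio
      ((-1024 * R ^ 2 - 48 * R * √(1 - 64 * R) + 80 * R + √(1 - 64 * R) - 1) /
        (512 * R ^ 3 * √(1 - 64 * R))) R := by
  have hpos : 0 < 1 - 64 * R := by linarith
  have hsqrt := hasDerivAt_sqrt_one_sub_mul (c := 64) (x := R) hpos.ne'
  have h := (((hsqrt.const_mul 2).const_sub 3).div ((hasDerivAt_id' R).const_mul 32)
      (by simpa using h0)).add
    ((hsqrt.const_add (-1)).div ((hasDerivAt_pow 2 R).const_mul 1024) (by simpa using h0))
    |>.sub_const (3 / 2)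
  refine h.congr_deriv ?_
  have hs := sq_sqrt hpos.le
  have hs0 := (sqrt_pos.2 hpos).ne'
  field_simp
  linear_combination (2097152 * R ^ 2 - 65536 * R) * hs

theorem areaRatio_deriv (R : ℝ) (h0 : 0 < R) (h1 : R < 1/64) :
    HasDerivAt areaRatio
      ((-1024 * R^2 - 48 * R * Real.sqrt (1 - 64 * R) + 80 * R +
        Real.sqrt (1 - 64 * R) - 1) / (512 * R^3 * Real.sqrt (1 - 64 * R))) R ∧
    0 ≤ (-1024 * R^2 - 48 * R * Real.sqrt (1 - 64 * R) + 80 * R +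
        Real.sqrt (1 - 64 * R) - 1) / (512 * R^3 * Real.sqrt (1 - 64 * R)) := by
  refine ⟨hasDerivAt_areaRatio h0.ne' h1, div_nonneg ?_ (by positivity)⟩
  rw [areaRatio_deriv_numerator_eq (sq_sqrt (by linarith))]
  have : 0 ≤ 1 - √(1 - 64 * R) := sub_nonneg.2 (sqrt_le_one.2 (by linarith))
  positivity
end

section
/- Let a > 0 and k a nonnegative integer. The k-th ECH capacity of the ball B(a) is c_k(B(a)) = a·d, where d is the unique nonnegative integer with (d² + d)/2 ≤ k ≤ (d² + 3d)/2. In particular, for every nonnegative integer k there exists a unique such d. -/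
/-- The k-th term (starting at k = 0) of the sequence N(a,b): all values
`m*a + n*b` for nonnegative integers `m, n`, arranged in nondecreasing order
(with multiplicity).  It equals the least `t ≥ 0` such that at least `k+1`
pairs `(m,n)` satisfy `m*a + n*b ≤ t`. -/
noncomputable def Nseq (a b : ℝ) (k : ℕ) : ℝ :=
  sInf {t : ℝ | 0 ≤ t ∧
    k + 1 ≤ Nat.card {p : ℕ × ℕ | (p.1 : ℝ) * a + (p.2 : ℝ) * b ≤ t}}

/-- The k-th ECH capacity of the ball `B(a) = E(a,a)`. -/
noncomputable def echBall (a : ℝ) (k : ℕ) : ℝ := Nseq a a k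

/-!
With `b = a` the lattice points `(m, n)` with `m a + n a ≤ t` are those with
`m + n ≤ ⌊t / a⌋`, and there are `(⌊t / a⌋ + 2).choose 2` of them. So `N(a, a)_k = a d` for the
least `d` with `k < (d + 2).choose 2`, i.e. for the `d` with
`(d + 1).choose 2 ≤ k < (d + 2).choose 2`. As `(d + 1).choose 2 = (d² + d) / 2` and
`(d + 2).choose 2 = (d² + 3d) / 2 + 1`, these are the bounds `(d² + d) / 2 ≤ k ≤ (d² + 3d) / 2`.
-/

namespace Nat

theorem sum_range_add_one_eq_choose_two (n : ℕ) :
    ∑ i ∈ Finset.range n, (i + 1) = (n + 1).choose 2 := by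
  induction n with
  | zero => simp
  | succ n ih => rw [Finset.sum_range_succ, ih, choose_succ_succ (n + 1) 1, choose_one_right]; ring

theorem card_add_le_eq_choose_two (D : ℕ) :
    Nat.card {p : ℕ × ℕ | p.1 + p.2 ≤ D} = (D + 2).choose 2 := by
  have hset : {p : ℕ × ℕ | p.1 + p.2 ≤ D} =
      ↑((Finset.range (D + 1)).biUnion Finset.HasAntidiagonal.antidiagonal) := by
    ext p
    simp
  rw [hset, Nat.card_coe_set_eq, Set.ncard_coe_finset, Finset.card_biUnion]
  · simp only [Finset.Nat.card_antidiagonal]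
    exact sum_range_add_one_eq_choose_two (D + 1)
  · intro x _ y _ hxy
    simp only [Finset.disjoint_left, Finset.HasAntidiagonal.mem_antidiagonal]
    exact fun p hx hy => hxy (hx.symm.trans hy)

theorem cast_choose_two_add_one (n : ℕ) : ((n + 1).choose 2 : ℝ) = ((n : ℝ) ^ 2 + n) / 2 := by
  have h := add_one_mul_choose_eq n 1
  rw [choose_one_right] at h
  have h' : ((n + 1 : ℕ) : ℝ) * n = ((n + 1).choose 2 : ℕ) * 2 := by exact_mod_cast h
  push_cast at h'
  linarith

theorem choose_two_le_and_lt_iff (k d : ℕ) :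
    (d + 1).choose 2 ≤ k ∧ k < (d + 2).choose 2 ↔
      ((d : ℝ) ^ 2 + d) / 2 ≤ k ∧ (k : ℝ) ≤ ((d : ℝ) ^ 2 + 3 * d) / 2 := by
  have h : ((d + 2).choose 2 : ℝ) = ((d : ℝ) ^ 2 + 3 * d) / 2 + 1 := by
    rw [cast_choose_two_add_one (d + 1)]; push_cast; ring
  refine and_congr ?_ ?_
  · rw [← cast_choose_two_add_one, cast_le]
  · rw [← add_one_le_iff, ← cast_le (α := ℝ), h, cast_add_one, add_le_add_iff_right]

theorem exists_choose_two_le_lt (k : ℕ) : ∃ d, (d + 1).choose 2 ≤ k ∧ k < (d + 2).choose 2 := by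
  have hex : ∃ D, k < (D + 2).choose 2 := ⟨k, by
    rw [choose_succ_succ (k + 1) 1, choose_one_right]; omega⟩
  refine ⟨Nat.find hex, ?_, Nat.find_spec hex⟩
  rcases h : Nat.find hex with _ | d
  · simp
  · exact not_lt.1 (Nat.find_min hex (h ▸ lt_add_one d))

variable {k d : ℕ}

theorem le_iff_lt_choose_two (hlo : (d + 1).choose 2 ≤ k) (hhi : k < (d + 2).choose 2) (D : ℕ) :
    d ≤ D ↔ k < (D + 2).choose 2 := by
  refine ⟨fun h => hhi.trans_le (choose_le_choose 2 (by omega)), fun h => ?_⟩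
  by_contra! hD
  exact (h.trans_le (choose_le_choose 2 (by omega))).not_ge hlo

theorem eq_of_choose_two_le_lt {d' : ℕ} (hlo : (d + 1).choose 2 ≤ k) (hhi : k < (d + 2).choose 2)
    (hlo' : (d' + 1).choose 2 ≤ k) (hhi' : k < (d' + 2).choose 2) : d = d' :=
  eq_of_forall_ge_iff fun D => (le_iff_lt_choose_two hlo hhi D).trans
    (le_iff_lt_choose_two hlo' hhi' D).symm

end Nat

theorem card_setOf_mul_add_mul_le {a t : ℝ} (ha : 0 < a) (ht : 0 ≤ t) :
    Nat.card {p : ℕ × ℕ | (p.1 : ℝ) * a + (p.2 : ℝ) * a ≤ t} = (⌊t / a⌋₊ + 2).choose 2 := by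
  have hset : {p : ℕ × ℕ | (p.1 : ℝ) * a + (p.2 : ℝ) * a ≤ t} = {p | p.1 + p.2 ≤ ⌊t / a⌋₊} := by
    ext p
    rw [Set.mem_ofPred_eq, Set.mem_ofPred_eq, Nat.le_floor_iff (div_nonneg ht ha.le),
      le_div_iff₀ ha]
    push_cast
    rw [add_mul]
  rw [hset, Nat.card_add_le_eq_choose_two]

theorem echBall_eq_mul {a : ℝ} (ha : 0 < a) {k d : ℕ} (hlo : (d + 1).choose 2 ≤ k)
    (hhi : k < (d + 2).choose 2) : echBall a k = a * d := by
  have hcount : ∀ {t : ℝ}, 0 ≤ t →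
      (k + 1 ≤ Nat.card {p : ℕ × ℕ | (p.1 : ℝ) * a + (p.2 : ℝ) * a ≤ t} ↔ a * d ≤ t) := by
    intro t ht
    rw [card_setOf_mul_add_mul_le ha ht, Nat.add_one_le_iff, ← Nat.le_iff_lt_choose_two hlo hhi,
      Nat.le_floor_iff (div_nonneg ht ha.le), le_div_iff₀ ha, mul_comm]
  suffices h : {t : ℝ | 0 ≤ t ∧
      k + 1 ≤ Nat.card {p : ℕ × ℕ | (p.1 : ℝ) * a + (p.2 : ℝ) * a ≤ t}} = Set.Ici (a * d) by
    rw [echBall, Nseq, h, csInf_Ici]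
  ext t
  rw [Set.mem_ofPred_eq, Set.mem_Ici]
  refine ⟨fun ⟨ht, hk⟩ => (hcount ht).1 hk, fun ht => ?_⟩
  have ht0 : 0 ≤ t := (mul_nonneg ha.le d.cast_nonneg).trans ht
  exact ⟨ht0, (hcount ht0).2 ht⟩

theorem ech_capacity_ball (a : ℝ) (ha : 0 < a) (k : ℕ) :
    (∃! d : ℕ, ((d:ℝ)^2 + d) / 2 ≤ k ∧ (k : ℝ) ≤ ((d:ℝ)^2 + 3 * d) / 2) ∧
    ∀ d : ℕ, ((d:ℝ)^2 + d) / 2 ≤ k → (k : ℝ) ≤ ((d:ℝ)^2 + 3 * d) / 2 →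
      echBall a k = a * d := by
  obtain ⟨d, hlo, hhi⟩ := Nat.exists_choose_two_le_lt k
  refine ⟨⟨d, (Nat.choose_two_le_and_lt_iff k d).1 ⟨hlo, hhi⟩, fun d' hd' => ?_⟩,
    fun d' hlo' hhi' => ?_⟩
  · obtain ⟨hlo', hhi'⟩ := (Nat.choose_two_le_and_lt_iff k d').2 hd'
    exact Nat.eq_of_choose_two_le_lt hlo' hhi' hlo hhi
  · obtain ⟨hlo', hhi'⟩ := (Nat.choose_two_le_and_lt_iff k d').2 ⟨hlo', hhi'⟩
    exact echBall_eq_mul ha hlo' hhi'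
end
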